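/- Let A, C ∈ U(n) ⊂ Sp(2n,ℝ) and B ∈ Sp(2n,ℝ) satisfy A = B⁻¹ C B. Then A = r(B)⁻¹ C r(B), where r(B) = B(BᵀB)^{-1/2}. -/

import Mathlib

/-! If `BA = CB` with `C` orthogonal, then `Aᵀ (BᵀB) A = BᵀB`; as `A` is orthogonal too, `A`
commutes with `BᵀB`, hence with `S = (BᵀB)^{1/2}` by the functional calculus. Since
`r(B) = B S⁻¹`, conjugating by `r(B)` is conjugating by `B` followed by conjugating by `S⁻¹`,
and the latter fixes `A`. -/

open Matrix

/-- The retraction `r(B) = B * (BᵀB)^{-1/2}` from `Sp(2n,ℝ)` to `U(n)`. -/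
noncomputable def symplecticRetract {l : Type*} [DecidableEq l] [Fintype l]
    (B : Matrix (l ⊕ l) (l ⊕ l) ℝ) : Matrix (l ⊕ l) (l ⊕ l) ℝ :=
  B * ((((Matrix.posSemidef_conjTranspose_mul_self B).1.eigenvectorUnitary : Matrix (l ⊕ l) (l ⊕ l) ℝ) *
    diagonal ((↑) ∘ (√·) ∘ (Matrix.posSemidef_conjTranspose_mul_self B).1.eigenvalues) *
    (star ((Matrix.posSemidef_conjTranspose_mul_self B).1.eigenvectorUnitary : Matrix (l ⊕ l) (l ⊕ l) ℝ))))⁻¹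

open scoped ComplexOrder MatrixOrder

theorem Matrix.PosSemidef.eigenvectorUnitary_mul_diagonal_sqrt_mul_star
    {𝕜 n : Type*} [RCLike 𝕜] [Fintype n] [DecidableEq n] {M : Matrix n n 𝕜}
    (hM : M.PosSemidef) :
    (hM.1.eigenvectorUnitary : Matrix n n 𝕜) * diagonal ((↑) ∘ (√·) ∘ hM.1.eigenvalues) *
      star (hM.1.eigenvectorUnitary : Matrix n n 𝕜) = CFC.sqrt M := by
  rw [CFC.sqrt_eq_real_sqrt _ hM.nonneg, cfcₙ_eq_cfc, hM.1.cfc_eq, IsHermitian.cfc,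
    Unitary.conjStarAlgAut_apply]

theorem symplecticRetract_eq {l : Type*} [DecidableEq l] [Fintype l]
    (B : Matrix (l ⊕ l) (l ⊕ l) ℝ) : symplecticRetract B = B * (CFC.sqrt (Bᵀ * B))⁻¹ := by
  rw [← conjTranspose_eq_transpose_of_trivial]
  exact congrArg (B * ·⁻¹)
    (posSemidef_conjTranspose_mul_self B).eigenvectorUnitary_mul_diagonal_sqrt_mul_star

theorem Matrix.isUnit_det_sqrt_transpose_mul_self {n : Type*} [Fintype n] [DecidableEq n]
    {B : Matrix n n ℝ} (hB : IsUnit B.det) : IsUnit (CFC.sqrt (Bᵀ * B)).det := by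
  have hM : (Bᵀ * B).PosSemidef := by
    simpa only [conjTranspose_eq_transpose_of_trivial] using posSemidef_conjTranspose_mul_self B
  rw [hM.det_sqrt, RCLike.sqrt_real, det_mul, det_transpose, isUnit_iff_ne_zero]
  exact Real.sqrt_ne_zero'.mpr (mul_self_pos.mpr hB.ne_zero)

theorem Matrix.commute_transpose_mul_self_of_mul_eq_mul {n R : Type*} [Fintype n] [DecidableEq n]
    [CommRing R] {A B C : Matrix n n R} (hAo : Aᵀ * A = 1) (hCo : Cᵀ * C = 1)
    (hBA : B * A = C * B) : Commute A (Bᵀ * B) := by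
  have hconj : Aᵀ * (Bᵀ * B) * A = Bᵀ * B :=
    calc Aᵀ * (Bᵀ * B) * A = (B * A)ᵀ * (B * A) := by rw [transpose_mul]; noncomm_ring
      _ = Bᵀ * (Cᵀ * C) * B := by rw [hBA, transpose_mul]; noncomm_ring
      _ = Bᵀ * B := by rw [hCo, mul_one]
  calc A * (Bᵀ * B) = A * Aᵀ * (Bᵀ * B) * A := by nth_rw 1 [← hconj]; noncomm_ring
    _ = Bᵀ * B * A := by rw [mul_eq_one_comm.mp hAo, one_mul]

theorem Matrix.eq_conj_mul_inv_of_commute {n R : Type*} [Fintype n] [DecidableEq n]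
    [CommRing R] {A B C S : Matrix n n R} (hS : IsUnit S.det) (hAS : Commute A S)
    (h : A = B⁻¹ * C * B) : A = (B * S⁻¹)⁻¹ * C * (B * S⁻¹) := by
  rw [mul_inv_rev, nonsing_inv_nonsing_inv S hS,
    show S * B⁻¹ * C * (B * S⁻¹) = S * (B⁻¹ * C * B) * S⁻¹ by noncomm_ring, ← h, ← hAS.eq,
    mul_assoc, mul_nonsing_inv S hS, mul_one]

theorem retract_conjugation_general {l : Type*} [DecidableEq l] [Fintype l]
    (A B C : Matrix (l ⊕ l) (l ⊕ l) ℝ)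
    (hAo : Aᵀ * A = 1)
    (hCo : Cᵀ * C = 1)
    (hB : B ∈ Matrix.symplecticGroup l ℝ)
    (h : A = B⁻¹ * C * B) :
    A = (symplecticRetract B)⁻¹ * C * symplecticRetract B := by
  have hBdet : IsUnit B.det := SymplecticGroup.symplectic_det hB
  have hBA : B * A = C * B := by rw [h, ← mul_assoc, ← mul_assoc, mul_nonsing_inv B hBdet, one_mul]
  have hAS : Commute A (CFC.sqrt (Bᵀ * B)) := by
    rw [CFC.sqrt_eq_cfc]
    exact ((commute_transpose_mul_self_of_mul_eq_mul hAo hCo hBA).symm.cfc_nnreal _).symm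
  rw [symplecticRetract_eq]
  exact eq_conj_mul_inv_of_commute (isUnit_det_sqrt_transpose_mul_self hBdet) hAS h

/-- If `A, C ∈ U(n) = Sp(2n,ℝ) ∩ O(2n)` and `B ∈ Sp(2n,ℝ)` satisfy `A = B⁻¹ C B`, then
`A = r(B)⁻¹ C r(B)` where `r(B) = B (BᵀB)^{-1/2}`. -/
theorem retract_conjugation {l : Type*} [DecidableEq l] [Fintype l]
    (A B C : Matrix (l ⊕ l) (l ⊕ l) ℝ)
    (hA : A ∈ Matrix.symplecticGroup l ℝ) (hAo : Aᵀ * A = 1)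
    (hC : C ∈ Matrix.symplecticGroup l ℝ) (hCo : Cᵀ * C = 1)
    (hB : B ∈ Matrix.symplecticGroup l ℝ)
    (h : A = B⁻¹ * C * B) :
    A = (symplecticRetract B)⁻¹ * C * symplecticRetract B :=
  retract_conjugation_general A B C hAo hCo hB h
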